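/- Let f̆ : ℕ → ℝ be increasing with f̆(n) ≥ 1 for all n, and let d ≥ 2 be an integer. If ∑_{n=1}^∞ 1/f̆(n) = ∞, then ∑_{m=1}^∞ d^m/(f̆(d^{m+1}) + d^{m+1}) = ∞. -/

import Mathlib

/-!
If the series converged, its terms `d ^ m / (f̆ (d ^ (m + 1)) + d ^ (m + 1))` would tend to `0`,
which forces `d ^ (m + 1) ≤ f̆ (d ^ (m + 1))` eventually; then `d ^ (m + 1) / f̆ (d ^ (m + 1))` is
at most `2 d` times the `m`-th term, so `∑ d ^ k / f̆ (d ^ k)` converges, and by Cauchy condensation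
in base `d` so does `∑ 1 / f̆ n`.
-/

theorem summable_condensed_pow_iff_of_nonneg {f : ℕ → ℝ} {d : ℕ} (hd : 2 ≤ d)
    (h_nonneg : ∀ n, 0 ≤ f n) (h_mono : ∀ ⦃m n⦄, 0 < m → m ≤ n → f n ≤ f m) :
    (Summable fun k : ℕ => (d : ℝ) ^ k * f (d ^ k)) ↔ Summable f := by
  have h_succ_diff : SuccDiffBounded d (d ^ ·) := fun n => by
    simp only [smul_eq_mul, Nat.mul_sub, ← pow_succ']
    rfl
  have hd₁ : (d : ℝ) - 1 ≠ 0 := by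
    have : (2 : ℝ) ≤ d := by exact_mod_cast hd
    linarith
  rw [← summable_schlomilch_iff_of_nonneg h_nonneg h_mono (fun n => by positivity)
    (pow_right_strictMono₀ (by omega : 1 < d)) (by omega) h_succ_diff,
    ← summable_mul_left_iff hd₁]
  congr! 2 with k
  push_cast
  ring

theorem summable_div_of_summable_div_add {ι : Type*} {x y : ι → ℝ} (hx : ∀ i, 0 ≤ x i)
    (hy : ∀ i, 0 < y i) (h : Summable fun i => x i / (y i + x i)) :
    Summable fun i => x i / y i := by
  refine (h.mul_left 2).of_norm_bounded_eventually ?_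
  filter_upwards [h.tendsto_cofinite_zero.eventually_lt_const (by norm_num : (0 : ℝ) < 1 / 2)]
    with i hi
  have hyx : 0 < y i + x i := add_pos_of_pos_of_nonneg (hy i) (hx i)
  have hxy : x i ≤ y i := by
    rw [div_lt_iff₀ hyx] at hi
    linarith
  rw [Real.norm_of_nonneg (div_nonneg (hx i) (hy i).le), ← mul_div_assoc,
    div_le_div_iff₀ (hy i) hyx]
  nlinarith [hx i]

/-- If `f̆ : ℕ → ℝ` is increasing with `f̆ ≥ 1` and `d ≥ 2`, then divergence of
`∑ 1/f̆(n)` implies divergence of `∑_m d^m / (f̆(d^{m+1}) + d^{m+1})`. -/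
theorem sum_geom_over_breve_diverges (fb : ℕ → ℝ) (hmono : Monotone fb)
    (hone : ∀ n, 1 ≤ fb n) (d : ℕ) (hd : 2 ≤ d)
    (hdiv : ¬ Summable (fun n : ℕ => 1 / fb n)) :
    ¬ Summable (fun m : ℕ => (d : ℝ) ^ m / (fb (d ^ (m + 1)) + (d : ℝ) ^ (m + 1))) := by
  intro hS
  have hpos : ∀ n, 0 < fb n := fun n => one_pos.trans_le (hone n)
  have hscaled : Summable fun m : ℕ =>
      (d : ℝ) ^ (m + 1) / (fb (d ^ (m + 1)) + (d : ℝ) ^ (m + 1)) :=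
    (hS.mul_left (d : ℝ)).congr fun m => by rw [mul_div_assoc', ← pow_succ']
  have hratio := summable_div_of_summable_div_add (fun m => by positivity) (fun m => hpos _) hscaled
  have hcondensed : Summable fun k : ℕ => (d : ℝ) ^ k * (1 / fb (d ^ k)) :=
    (summable_nat_add_iff 1).1 (hratio.congr fun m => (mul_one_div _ _).symm)
  exact hdiv <| (summable_condensed_pow_iff_of_nonneg hd (fun n => (one_div_pos.2 (hpos n)).le)
    fun m n _ hmn => one_div_le_one_div_of_le (hpos m) (hmono hmn)).1 hcondensed
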